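/- Let A = {P^A_i} and B = {P^B_j} be projective observables on ℂ^d. Then Q_F(A→B) ≤ 1 − 1/d; equivalently, for every density matrix ρ, (Σ_j √(q^{A→B}_ρ(j) · p^B_ρ(j)))² ≥ 1/d. -/

import Mathlib

open scoped BigOperators ComplexOrder
open Matrix

noncomputable section

/-- A projective observable: a finite family of mutually orthogonal
self-adjoint idempotents summing to the identity. -/
def IsProjObs {d r : ℕ} (P : Fin r → Matrix (Fin d) (Fin d) ℂ) : Prop :=
  (∀ i, (P i).IsHermitian) ∧ (∀ i, P i * P i = P i) ∧
    (∀ i k, i ≠ k → P i * P k = 0) ∧ (∑ i, P i = 1)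

/-- A density matrix: positive semidefinite with unit trace. -/
def IsDensity {d : ℕ} (ρ : Matrix (Fin d) (Fin d) ℂ) : Prop :=
  ρ.PosSemidef ∧ ρ.trace = 1

/-- The measurement channel `E^A(ρ) = Σ_i P_i ρ P_i` of a projective observable. -/
def measChannel {d r : ℕ} (P : Fin r → Matrix (Fin d) (Fin d) ℂ)
    (ρ : Matrix (Fin d) (Fin d) ℂ) : Matrix (Fin d) (Fin d) ℂ :=
  ∑ i, P i * ρ * P i

/-- `p^B_ρ(j) = tr(P^B_j ρ)`. -/
def probB {d rB : ℕ} (Q : Fin rB → Matrix (Fin d) (Fin d) ℂ)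
    (ρ : Matrix (Fin d) (Fin d) ℂ) (j : Fin rB) : ℝ :=
  ((Q j * ρ).trace).re

/-- `q^{A→B}_ρ(j) = tr(P^B_j Σ_i P^A_i ρ P^A_i)`. -/
def probAB {d rA rB : ℕ} (P : Fin rA → Matrix (Fin d) (Fin d) ℂ)
    (Q : Fin rB → Matrix (Fin d) (Fin d) ℂ)
    (ρ : Matrix (Fin d) (Fin d) ℂ) (j : Fin rB) : ℝ :=
  ((Q j * measChannel P ρ).trace).re

open Classical in
/-- The positive semidefinite square root of a PSD matrix (junk value `0` otherwise). -/
noncomputable def msqrt {d : ℕ} (A : Matrix (Fin d) (Fin d) ℂ) :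
    Matrix (Fin d) (Fin d) ℂ :=
  if h : A.PosSemidef then
    (h.1.eigenvectorUnitary : Matrix (Fin d) (Fin d) ℂ) *
      Matrix.diagonal ((↑) ∘ Real.sqrt ∘ h.1.eigenvalues) *
      (star h.1.eigenvectorUnitary : Matrix (Fin d) (Fin d) ℂ)
  else 0

/-- `|X| = √(Xᴴ X)`, the positive semidefinite absolute value of a matrix. -/
noncomputable def matAbs {d : ℕ} (X : Matrix (Fin d) (Fin d) ℂ) :
    Matrix (Fin d) (Fin d) ℂ :=
  msqrt (Xᴴ * X)

/-- The quantum fidelity `F(ρ,σ) = tr √(√ρ σ √ρ)`. -/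
noncomputable def qFid {d : ℕ} (ρ σ : Matrix (Fin d) (Fin d) ℂ) : ℝ :=
  ((msqrt (msqrt ρ * σ * msqrt ρ)).trace).re

/-- Variational distance `D_1(p,q) = (1/2) Σ_j |p_j − q_j|`. -/
def distL1 {rB : ℕ} (p q : Fin rB → ℝ) : ℝ := (1 / 2) * ∑ j, |p j - q j|

/-- Chebyshev distance `D_∞(p,q) = max_j |p_j − q_j|`. -/
noncomputable def distLinf {rB : ℕ} (p q : Fin rB → ℝ) : ℝ := ⨆ j, |p j - q j|

/-- Classical fidelity `F(p,q) = Σ_j √(p_j q_j)`. -/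
noncomputable def classFid {rB : ℕ} (p q : Fin rB → ℝ) : ℝ :=
  ∑ j, Real.sqrt (p j * q j)

/-- `Q_1(A→B)`. -/
noncomputable def Q1 {d rA rB : ℕ} (P : Fin rA → Matrix (Fin d) (Fin d) ℂ)
    (Q : Fin rB → Matrix (Fin d) (Fin d) ℂ) : ℝ :=
  sSup {x : ℝ | ∃ ρ, IsDensity ρ ∧ x = distL1 (probAB P Q ρ) (probB Q ρ)}

/-- `Q_∞(A→B)`. -/
noncomputable def Qinf {d rA rB : ℕ} (P : Fin rA → Matrix (Fin d) (Fin d) ℂ)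
    (Q : Fin rB → Matrix (Fin d) (Fin d) ℂ) : ℝ :=
  sSup {x : ℝ | ∃ ρ, IsDensity ρ ∧ x = distLinf (probAB P Q ρ) (probB Q ρ)}

/-- `Q_F(A→B)`. -/
noncomputable def QF {d rA rB : ℕ} (P : Fin rA → Matrix (Fin d) (Fin d) ℂ)
    (Q : Fin rB → Matrix (Fin d) (Fin d) ℂ) : ℝ :=
  sSup {x : ℝ | ∃ ρ, IsDensity ρ ∧
    x = 1 - (classFid (probAB P Q ρ) (probB Q ρ)) ^ 2}

/-- The rank-one projection `|v⟩⟨v|` onto a (unit) vector `v`. -/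
def proj {d : ℕ} (v : Fin d → ℂ) : Matrix (Fin d) (Fin d) ℂ :=
  Matrix.vecMulVec v (star v)

/-! Writing `ρ = Bᴴ B`, the quadratic form of `ρ` at `x` is `‖∑ᵢ B Pᵢ x‖²`. The vectors `Pᵢ x` are
pairwise orthogonal, so at most `d` of them are nonzero, and Cauchy–Schwarz gives the pinching
inequality `ρ ≤ d · ∑ᵢ Pᵢ ρ Pᵢ`. Tracing against `P^B_j` yields `p_j ≤ d q_j`, hence
`∑ⱼ √(q_j p_j) ≥ ∑ⱼ p_j / √d = 1 / √d`. -/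

open Finset

section

variable {n : Type*} [Fintype n]

lemma star_dotProduct_self_eq_norm_sq (v : n → ℂ) :
    star v ⬝ᵥ v = ((‖WithLp.toLp 2 v‖ ^ 2 : ℝ) : ℂ) := by
  rw [dotProduct_comm, ← EuclideanSpace.inner_toLp_toLp, inner_self_eq_norm_sq_to_K]
  push_cast
  rfl

lemma star_dotProduct_conjTranspose_mul_self_mulVec (C : Matrix n n ℂ) (x : n → ℂ) :
    star x ⬝ᵥ ((Cᴴ * C) *ᵥ x) = ((‖WithLp.toLp 2 (C *ᵥ x)‖ ^ 2 : ℝ) : ℂ) := by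
  rw [← mulVec_mulVec, dotProduct_mulVec, ← star_mulVec, star_dotProduct_self_eq_norm_sq]

lemma re_trace_mul_nonneg_of_isHermitian_of_mul_self {Q M : Matrix n n ℂ}
    (hQ : Q.IsHermitian) (hQQ : Q * Q = Q) (hM : M.PosSemidef) : 0 ≤ (Q * M).trace.re := by
  have htr : (Q * M).trace = (Q * M * Qᴴ).trace := by
    rw [hQ.eq, trace_mul_comm (Q * M), ← mul_assoc, hQQ]
  exact htr ▸ (Complex.nonneg_iff.mp (hM.mul_mul_conjTranspose_same Q).trace_nonneg).1

end

lemma card_filter_ne_zero_le_finrank {𝕜 E ι : Type*} [RCLike 𝕜] [NormedAddCommGroup E]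
    [InnerProductSpace 𝕜 E] [FiniteDimensional 𝕜 E] [Fintype ι] [DecidableEq E] {v : ι → E}
    (hv : Pairwise fun i j => inner 𝕜 (v i) (v j) = 0) :
    #{i | v i ≠ 0} ≤ Module.finrank 𝕜 E := by
  have hli : LinearIndependent 𝕜 fun i : {i // v i ≠ 0} => v i :=
    linearIndependent_of_ne_zero_of_inner_eq_zero (fun i => i.2)
      fun i j hij => hv (Subtype.coe_injective.ne hij)
  simpa [Fintype.card_subtype] using hli.fintype_card_le_finrank

lemma norm_sum_sq_le_card_mul_sum_norm_sq {E ι : Type*} [SeminormedAddCommGroup E] [Fintype ι]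
    [DecidableEq E] (v : ι → E) :
    ‖∑ i, v i‖ ^ 2 ≤ #{i | v i ≠ 0} * ∑ i, ‖v i‖ ^ 2 := by
  calc ‖∑ i, v i‖ ^ 2 = ‖∑ i with v i ≠ 0, v i‖ ^ 2 := by rw [sum_filter_ne_zero]
    _ ≤ (∑ i with v i ≠ 0, ‖v i‖) ^ 2 := by gcongr; exact norm_sum_le _ _
    _ ≤ #{i | v i ≠ 0} * ∑ i with v i ≠ 0, ‖v i‖ ^ 2 := sq_sum_le_card_mul_sum_sq
    _ ≤ #{i | v i ≠ 0} * ∑ i, ‖v i‖ ^ 2 := by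
        gcongr
        exact subset_univ _

namespace IsProjObs

variable {d r : ℕ} {P : Fin r → Matrix (Fin d) (Fin d) ℂ}

lemma card_filter_mulVec_ne_zero_le (hP : IsProjObs P) (x : Fin d → ℂ) :
    #{i | P i *ᵥ x ≠ 0} ≤ d := by
  have hortho : Pairwise fun i k =>
      inner ℂ (WithLp.toLp 2 (P i *ᵥ x)) (WithLp.toLp 2 (P k *ᵥ x)) = 0 := by
    intro i k hik
    rw [EuclideanSpace.inner_toLp_toLp, dotProduct_comm, star_mulVec, ← dotProduct_mulVec,
      mulVec_mulVec, (hP.1 i).eq, hP.2.2.1 i k hik, zero_mulVec, dotProduct_zero]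
  simpa using card_filter_ne_zero_le_finrank hortho

open scoped MatrixOrder in
theorem posSemidef_smul_measChannel_sub (hP : IsProjObs P) {ρ : Matrix (Fin d) (Fin d) ℂ}
    (hρ : ρ.PosSemidef) : ((d : ℂ) • measChannel P ρ - ρ).PosSemidef := by
  obtain ⟨B, rfl⟩ := CStarAlgebra.nonneg_iff_eq_star_mul_self.mp hρ.nonneg
  have hE : measChannel P (star B * B) = ∑ i, (B * P i)ᴴ * (B * P i) := by
    simp only [measChannel, conjTranspose_mul, (hP.1 _).eq, star_eq_conjTranspose, mul_assoc]
  refine .of_dotProduct_mulVec_nonneg ?_ fun x => ?_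
  · rw [hE]
    exact (IsHermitian.smul (isSelfAdjoint_sum _ fun i _ =>
      isHermitian_conjTranspose_mul_self (B * P i)) (.natCast d)).sub hρ.1
  set v : Fin r → EuclideanSpace ℂ (Fin d) := fun i => WithLp.toLp 2 (B *ᵥ (P i *ᵥ x))
  have hBx : WithLp.toLp 2 (B *ᵥ x) = ∑ i, v i := by
    rw [← WithLp.toLp_sum, ← mulVec_sum, ← sum_mulVec, hP.2.2.2, one_mulVec]
  have hcard : #{i | v i ≠ 0} ≤ d := by
    refine (card_le_card (monotone_filter_right _ fun i _ hv hPx => hv ?_)).trans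
      (hP.card_filter_mulVec_ne_zero_le x)
    simp only [v, hPx, mulVec_zero, WithLp.toLp_zero]
  have hnorm : ‖∑ i, v i‖ ^ 2 ≤ d * ∑ i, ‖v i‖ ^ 2 :=
    (norm_sum_sq_le_card_mul_sum_norm_sq v).trans (by gcongr)
  rw [sub_mulVec, dotProduct_sub, smul_mulVec, dotProduct_smul, hE, sum_mulVec, dotProduct_sum,
    star_eq_conjTranspose, star_dotProduct_conjTranspose_mul_self_mulVec, hBx]
  simp_rw [star_dotProduct_conjTranspose_mul_self_mulVec, ← mulVec_mulVec, smul_eq_mul]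
  exact_mod_cast sub_nonneg.2 hnorm

lemma probB_nonneg (hP : IsProjObs P) {ρ : Matrix (Fin d) (Fin d) ℂ} (hρ : ρ.PosSemidef)
    (i : Fin r) : 0 ≤ probB P ρ i :=
  re_trace_mul_nonneg_of_isHermitian_of_mul_self (hP.1 i) (hP.2.1 i) hρ

lemma sum_probB (hP : IsProjObs P) {ρ : Matrix (Fin d) (Fin d) ℂ} (hρ : IsDensity ρ) :
    ∑ i, probB P ρ i = 1 := by
  simp only [probB, ← Complex.re_sum, ← trace_sum, ← sum_mul, hP.2.2.2, one_mul, hρ.2,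
    Complex.one_re]

lemma probB_le_mul_probAB {rB : ℕ} {Q : Fin rB → Matrix (Fin d) (Fin d) ℂ} (hP : IsProjObs P)
    (hQ : IsProjObs Q) {ρ : Matrix (Fin d) (Fin d) ℂ} (hρ : ρ.PosSemidef) (j : Fin rB) :
    probB Q ρ j ≤ d * probAB P Q ρ j := by
  have h := re_trace_mul_nonneg_of_isHermitian_of_mul_self (hQ.1 j) (hQ.2.1 j)
    (hP.posSemidef_smul_measChannel_sub hρ)
  rwa [mul_sub, trace_sub, mul_smul_comm, trace_smul, Complex.sub_re, smul_eq_mul,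
    ← Complex.ofReal_natCast, Complex.re_ofReal_mul, sub_nonneg] at h

end IsProjObs

lemma one_div_le_classFid_sq {r : ℕ} {p q : Fin r → ℝ} {c : ℝ} (hc : 0 ≤ c)
    (hp : ∀ j, 0 ≤ p j) (hp1 : ∑ j, p j = 1) (hpq : ∀ j, p j ≤ c * q j) :
    1 / c ≤ classFid q p ^ 2 := by
  have hterm : ∀ j, p j ≤ √c * √(q j * p j) := fun j => by
    rw [← Real.sqrt_mul hc, ← mul_assoc, Real.le_sqrt (hp j) (by nlinarith [hp j, hpq j]), sq]
    exact mul_le_mul_of_nonneg_right (hpq j) (hp j)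
  have h1 : 1 ≤ √c * classFid q p := by
    rw [← hp1, classFid, mul_sum]
    exact sum_le_sum fun j _ => hterm j
  have h2 : 1 ≤ c * classFid q p ^ 2 := by
    calc (1 : ℝ) ≤ (√c * classFid q p) ^ 2 := by nlinarith
      _ = c * classFid q p ^ 2 := by rw [mul_pow, Real.sq_sqrt hc]
  rcases hc.eq_or_lt with rfl | hc
  · norm_num at h2
  · rwa [div_le_iff₀' hc]

theorem stmt_9_general {d rA rB : ℕ}
    (P : Fin rA → Matrix (Fin d) (Fin d) ℂ) (Q : Fin rB → Matrix (Fin d) (Fin d) ℂ)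
    (hP : IsProjObs P) (hQ : IsProjObs Q) :
    (∀ ρ : Matrix (Fin d) (Fin d) ℂ, IsDensity ρ →
        (classFid (probAB P Q ρ) (probB Q ρ)) ^ 2 ≥ 1 / (d : ℝ)) ∧
      QF P Q ≤ 1 - 1 / (d : ℝ) := by
  have hF : ∀ ρ : Matrix (Fin d) (Fin d) ℂ, IsDensity ρ →
      (classFid (probAB P Q ρ) (probB Q ρ)) ^ 2 ≥ 1 / (d : ℝ) := fun ρ hρ =>
    one_div_le_classFid_sq d.cast_nonneg (hQ.probB_nonneg hρ.1) (hQ.sum_probB hρ)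
      (hP.probB_le_mul_probAB hQ hρ.1)
  refine ⟨hF, Real.sSup_le ?_ (sub_nonneg.2 ?_)⟩
  · rintro _ ⟨ρ, hρ, rfl⟩
    linarith [hF ρ hρ]
  · simpa using Nat.cast_inv_le_one (α := ℝ) d

theorem stmt_9 {d rA rB : ℕ} (hd : 0 < d)
    (P : Fin rA → Matrix (Fin d) (Fin d) ℂ) (Q : Fin rB → Matrix (Fin d) (Fin d) ℂ)
    (hP : IsProjObs P) (hQ : IsProjObs Q) :
    (∀ ρ : Matrix (Fin d) (Fin d) ℂ, IsDensity ρ →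
        (classFid (probAB P Q ρ) (probB Q ρ)) ^ 2 ≥ 1 / (d : ℝ)) ∧
      QF P Q ≤ 1 - 1 / (d : ℝ) :=
  stmt_9_general P Q hP hQ
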